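/- arXiv:1312.0670 — 2 statements merged into one kernel-verified Lean document; each statement's English description precedes it below -/
import Mathlib

section
/- Multiplication is not definable in Presburger arithmetic: there is no first-order formula φ(x,y,z) in the language {+, <, 0, 1} such that for all natural numbers a, b, c, ⟨ℕ, +, <, 0, 1⟩ ⊨ φ(a,b,c) if and only if a·b = c. -/
open FirstOrder FirstOrder.Language FirstOrder.Language.Structure

/-- The function symbols of the language of Presburger arithmetic `{0, 1, +}`. -/
inductive PresFunc : ℕ → Type
  | zero : PresFunc 0
  | one : PresFunc 0
  | add : PresFunc 2
  deriving DecidableEq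

/-- The relation symbols of the language of Presburger arithmetic: `<`. -/
inductive PresRel : ℕ → Type
  | lt : PresRel 2
  deriving DecidableEq

/-- The language `⟨+, <, 0, 1⟩` of Presburger arithmetic. -/
def Lpres : FirstOrder.Language := ⟨PresFunc, PresRel⟩

/-- The standard interpretation of the language of Presburger arithmetic in `ℕ`. -/
instance : Lpres.Structure ℕ where
  funMap := fun {_} f v =>
    match f with
    | .zero => 0
    | .one => 1
    | .add => v 0 + v 1
  RelMap := fun {_} r v =>
    match r with
    | .lt => v 0 < v 1

/-!
Mathlib shows (`FirstOrder.Language.presburger.mul_not_definable`) that the graph of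
multiplication is not definable in `ℕ` over the language `{0, 1, +}`: definable sets are
semilinear, hence definable subsets of `ℕ` are eventually periodic, whereas the squares
`∃ y, x = y * y` are not. The order is definable from addition, `x < y ↔ ∃ z, x + (z + 1) = y`,
so every `{0, 1, +, <}`-formula translates into an equivalent `{0, 1, +}`-formula.
-/

namespace FirstOrder.Language.presburger

variable {α : Type*}

def ltFormula {n : ℕ} (t₁ t₂ : presburger.Term (α ⊕ Fin n)) : presburger.BoundedFormula α n :=
  ((t₁.relabel (Sum.map id Fin.castSucc) + (Term.var (Sum.inr (Fin.last n)) + 1)).bdEqual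
    (t₂.relabel (Sum.map id Fin.castSucc))).ex

theorem realize_ltFormula {n : ℕ} (t₁ t₂ : presburger.Term (α ⊕ Fin n)) (v : α → ℕ)
    (xs : Fin n → ℕ) :
    (ltFormula t₁ t₂).Realize v xs ↔ t₁.realize (Sum.elim v xs) < t₂.realize (Sum.elim v xs) := by
  have hv (z : ℕ) : Sum.elim v (Fin.snoc xs z) ∘ Sum.map id Fin.castSucc = Sum.elim v xs := by
    simp [Sum.elim_comp_map, Fin.snoc_comp_castSucc]
  simp only [ltFormula, BoundedFormula.realize_ex, BoundedFormula.realize_bdEqual, realize_add,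
    realize_one, Term.realize_relabel, hv, Term.realize_var, Sum.elim_inr, Fin.snoc_last]
  exact ⟨fun ⟨z, hz⟩ => by omega, fun h => (Nat.exists_eq_add_of_lt h).imp fun k hk => by omega⟩

end FirstOrder.Language.presburger

namespace Lpres

variable {α : Type*}

def funcTerm : ∀ {n}, Lpres.Functions n → presburger.Term (Fin n)
  | _, .zero => 0
  | _, .one => 1
  | _, .add => Term.var 0 + Term.var 1

theorem realize_substFunc_funcTerm (t : Lpres.Term α) (v : α → ℕ) :
    (t.substFunc funcTerm).realize v = t.realize v :=
  Term.realize_substFunc (fun g _ => by cases g <;> rfl) v t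

def toPresburger : ∀ {n}, Lpres.BoundedFormula α n → presburger.BoundedFormula α n
  | _, .falsum => .falsum
  | _, .equal t₁ t₂ => (t₁.substFunc funcTerm).bdEqual (t₂.substFunc funcTerm)
  | _, .rel .lt ts =>
    presburger.ltFormula ((ts 0).substFunc funcTerm) ((ts 1).substFunc funcTerm)
  | _, .imp φ ψ => (toPresburger φ).imp (toPresburger ψ)
  | _, .all φ => (toPresburger φ).all

theorem realize_toPresburger {n : ℕ} (φ : Lpres.BoundedFormula α n) (v : α → ℕ)
    (xs : Fin n → ℕ) : (toPresburger φ).Realize v xs ↔ φ.Realize v xs := by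
  induction φ with
  | falsum => rfl
  | equal t₁ t₂ =>
    simp only [toPresburger, BoundedFormula.realize_bdEqual, realize_substFunc_funcTerm]
    rfl
  | rel R ts =>
    cases R
    simp only [toPresburger, presburger.realize_ltFormula, realize_substFunc_funcTerm]
    rfl
  | imp φ ψ ihφ ihψ => simp only [toPresburger, BoundedFormula.realize_imp, ihφ, ihψ]
  | all φ ih => simp only [toPresburger, BoundedFormula.realize_all, ih]

theorem definable_setOf_realize (φ : Lpres.Formula α) :
    (∅ : Set ℕ).Definable presburger {v | φ.Realize v} :=
  Set.empty_definable_iff.2 ⟨toPresburger φ, Set.ext fun v => (realize_toPresburger φ v _).symm⟩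

end Lpres

/-- **Multiplication is not definable in Presburger arithmetic.** There is no first-order
formula `φ(x, y, z)` in the language `{+, <, 0, 1}` such that for all natural numbers
`a, b, c` we have `⟨ℕ, +, <, 0, 1⟩ ⊨ φ(a, b, c)` if and only if `a · b = c`. -/
theorem multiplication_not_presburger_definable :
    ¬ ∃ φ : Lpres.Formula (Fin 3), ∀ a b c : ℕ, φ.Realize ![a, b, c] ↔ a * b = c := by
  rintro ⟨φ, hφ⟩
  have hmul (v : Fin 3 → ℕ) : φ.Realize v ↔ v 0 * v 1 = v 2 := by
    rw [← hφ]
    congr!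
    ext i
    fin_cases i <;> rfl
  apply presburger.mul_not_definable (A := ∅)
  convert (Lpres.definable_setOf_realize φ).preimage_comp (![1, 2, 0] : Fin 3 → Fin 3) using 1
  ext v
  simp [hmul, eq_comm]
end

section
/- Every Presburger-definable subset of ℕ is eventually periodic: if A ⊆ ℕ is definable in ⟨ℕ, +, <, 0, 1⟩, then there exist N and p > 0 such that for all n ≥ N, n ∈ A iff n + p ∈ A. -/
open FirstOrder FirstOrder.Language FirstOrder.Language.Structure

/-- `A ⊆ ℕ` is definable (with parameters) in `⟨ℕ, +, <, 0, 1⟩`. -/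
def PresburgerDefinable (A : Set ℕ) : Prop :=
  ∃ (k : ℕ) (φ : Lpres.BoundedFormula (Fin k) 1) (v : Fin k → ℕ),
    ∀ n : ℕ, n ∈ A ↔ φ.Realize v ![n]

/-!
A subset of ℕ definable with parameters in `⟨ℕ, 0, 1, +⟩` is semilinear, hence ultimately
periodic (`presburger.definable₁_iff_ultimately_periodic`). So it suffices to eliminate `<`,
using `a < b ↔ ∃ z, a + z + 1 = b`, and to turn the parameters `v` into constants from
`Set.range v`.
-/

namespace Lpres

variable {β : Type*}

def termToPresburger : Lpres.Term β → presburger.Term β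
  | .var i => .var i
  | .func PresFunc.zero _ => 0
  | .func PresFunc.one _ => 1
  | .func PresFunc.add ts => termToPresburger (ts 0) + termToPresburger (ts 1)

@[simp]
theorem realize_termToPresburger (v : β → ℕ) (t : Lpres.Term β) :
    (termToPresburger t).realize v = t.realize v := by
  induction t with
  | var => rfl
  | func f ts ih =>
    cases f <;> simp only [termToPresburger, presburger.realize_zero, presburger.realize_one,
      presburger.realize_add, ih] <;> rfl

@[simp]
theorem relMap_lt (w : Fin 2 → ℕ) : RelMap (L := Lpres) PresRel.lt w ↔ w 0 < w 1 := Iff.rfl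

def formulaToPresburger : {n : ℕ} → Lpres.BoundedFormula β n → presburger.BoundedFormula β n
  | _, .falsum => .falsum
  | _, .equal t₁ t₂ => .equal (termToPresburger t₁) (termToPresburger t₂)
  | n, .rel PresRel.lt ts =>
    ∃' (((termToPresburger (ts 0)).relabel (Sum.map id Fin.castSucc) +
        .var (Sum.inr (Fin.last n)) + 1).bdEqual
      ((termToPresburger (ts 1)).relabel (Sum.map id Fin.castSucc)))
  | _, .imp φ ψ => .imp (formulaToPresburger φ) (formulaToPresburger ψ)
  | _, .all φ => .all (formulaToPresburger φ)

@[simp]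
theorem realize_formulaToPresburger {n : ℕ} (φ : Lpres.BoundedFormula β n) (v : β → ℕ)
    (xs : Fin n → ℕ) : (formulaToPresburger φ).Realize v xs ↔ φ.Realize v xs := by
  induction φ with
  | falsum => rfl
  | equal t₁ t₂ => simp [formulaToPresburger, BoundedFormula.Realize]
  | rel R ts =>
    cases R
    simp only [formulaToPresburger, BoundedFormula.realize_ex, BoundedFormula.realize_bdEqual,
      presburger.realize_add, presburger.realize_one, Term.realize_relabel, Term.realize_var,
      Sum.elim_comp_map, Function.comp_id, Fin.snoc_comp_castSucc, Sum.elim_inr, Fin.snoc_last,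
      realize_termToPresburger, BoundedFormula.Realize, relMap_lt]
    exact ⟨fun ⟨z, hz⟩ => by omega, fun h => (Nat.exists_eq_add_of_lt h).imp fun _ => Eq.symm⟩
  | imp φ ψ ihφ ihψ => simp [formulaToPresburger, ihφ, ihψ]
  | all φ ih => simp [formulaToPresburger, ih]

end Lpres

/-- **Presburger-definable sets are eventually periodic.** If `A ⊆ ℕ` is definable in
`⟨ℕ, +, <, 0, 1⟩`, then there are `N` and `p > 0` such that for all `n ≥ N`,
`n ∈ A ↔ n + p ∈ A`. -/
theorem presburger_definable_eventually_periodic (A : Set ℕ) (h : PresburgerDefinable A) :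
    ∃ N p : ℕ, 0 < p ∧ ∀ n : ℕ, N ≤ n → (n ∈ A ↔ n + p ∈ A) := by
  obtain ⟨k, φ, v, hA⟩ := h
  have hdef : (Set.range v).Definable₁ presburger A := by
    rw [Set.Definable₁, Set.definable_iff_exists_formula_sum]
    refine ⟨(Lpres.formulaToPresburger φ).toFormula.relabel
      (Sum.map (fun i => ⟨v i, i, rfl⟩) id), ?_⟩
    ext x
    simp only [Formula.realize_relabel, BoundedFormula.realize_toFormula, Sum.elim_comp_map,
      Lpres.realize_formulaToPresburger, Set.mem_ofPred_eq, hA]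
    exact iff_of_eq (congrArg _ (funext fun i => by fin_cases i; rfl))
  exact presburger.definable₁_iff_ultimately_periodic.1 hdef
end
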